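/- arXiv:2101.12428 — 3 statements merged into one kernel-verified Lean document; each statement's English description precedes it below -/
import Mathlib

section
/- Suppose every follower i ∈ {1,…,N} plays s_i^m = B_i · R_m / (Σ_{j=1}^M R_j) for all chains m, where all B_i > 0, all R_m > 0, and N ≥ 2. Then for each follower n and each pair of chains m, M, the marginal-utility balance condition R_m·T_m/(s_n^m + T_m)^2 = R_M·T_M/(s_n^M + T_M)^2 holds, where T_m = Σ_{i ≠ n} s_i^m. -/
/-! In the proportional profile both `s n m` and `T n m` are fixed multiples of `R m`, so
`R m * T n m / (s n m + T n m) ^ 2` is homogeneous of degree `0` in `R m` and hence the same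
for every chain. -/

theorem marginal_utility_of_proportional {r b c S : ℝ} (hr : r ≠ 0) (hS : S ≠ 0) :
    r * (c * r / S) / (b * r / S + c * r / S) ^ 2 = c * S / (b + c) ^ 2 := by
  rw [← add_div, ← add_mul, div_pow, mul_pow]
  rcases eq_or_ne (b + c) 0 with hbc | hbc
  · simp [hbc]
  · field_simp

theorem proportional_balance_general (N M : ℕ)
    (B : Fin N → ℝ) (R : Fin M → ℝ)
    (hR : ∀ m, 0 < R m)
    (s : Fin N → Fin M → ℝ)
    (hs : ∀ i m, s i m = B i * R m / ∑ j, R j)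
    (T : Fin N → Fin M → ℝ)
    (hT : ∀ n m, T n m = ∑ i ∈ Finset.univ.erase n, s i m) :
    ∀ (n : Fin N) (m m' : Fin M),
      R m * T n m / (s n m + T n m) ^ 2 = R m' * T n m' / (s n m' + T n m') ^ 2 := by
  intro n m m'
  have hS : ∑ j, R j ≠ 0 := (Finset.sum_pos (fun j _ => hR j) ⟨m, Finset.mem_univ m⟩).ne'
  have hT_prop : ∀ k, T n k = (∑ i ∈ Finset.univ.erase n, B i) * R k / ∑ j, R j := fun k => by
    rw [hT, Finset.sum_mul, Finset.sum_div]
    exact Finset.sum_congr rfl fun i _ => hs i k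
  rw [hs n m, hs n m', hT_prop m, hT_prop m', marginal_utility_of_proportional (hR m).ne' hS,
    marginal_utility_of_proportional (hR m').ne' hS]

theorem proportional_balance (N M : ℕ) (hN : 2 ≤ N)
    (B : Fin N → ℝ) (R : Fin M → ℝ)
    (hB : ∀ i, 0 < B i) (hR : ∀ m, 0 < R m)
    (s : Fin N → Fin M → ℝ)
    (hs : ∀ i m, s i m = B i * R m / ∑ j, R j)
    (T : Fin N → Fin M → ℝ)
    (hT : ∀ n m, T n m = ∑ i ∈ Finset.univ.erase n, s i m) :
    ∀ (n : Fin N) (m m' : Fin M),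
      R m * T n m / (s n m + T n m) ^ 2 = R m' * T n m' / (s n m' + T n m') ^ 2 :=
  proportional_balance_general N M B R hR s hs T hT
end

section
/- Consider the two-player follower game with budgets B_1, B_2 > 0 and M = 3 chains with rewards R_1, R_2, R_3 > 0, where player 2 plays s_2^m = B_2·R_m/(R_1+R_2+R_3). Then player 1's utility U_1(s) = Σ_m R_m·s^m/(s^m + s_2^m) over the simplex {s ≥ 0 : Σ s^m = B_1} is uniquely maximized at s_1^m = B_1·R_m/(R_1+R_2+R_3), with maximum value U_1* = B_1/(B_1+B_2)·(R_1+R_2+R_3). -/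
/-- Tangent-line identity for the strictly concave function `x ↦ R·x/(x+a)`. -/
lemma tangent_key (R a x xs : ℝ) (hx : 0 < x + a) (hxs : 0 < xs + a) :
    R * (x / (x + a)) =
      R * (xs / (xs + a)) + (R * a / (xs + a) ^ 2) * (x - xs)
        - R * a * (x - xs) ^ 2 / ((x + a) * (xs + a) ^ 2) := by
  have h1 : x + a ≠ 0 := ne_of_gt hx
  have h2 : xs + a ≠ 0 := ne_of_gt hxs
  field_simp
  ring

theorem two_player_three_chain_best_response
    (B₁ B₂ : ℝ) (hB₁ : 0 < B₁) (hB₂ : 0 < B₂)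
    (R : Fin 3 → ℝ) (hR : ∀ m, 0 < R m)
    (s₂ : Fin 3 → ℝ) (hs₂ : ∀ m, s₂ m = B₂ * R m / ∑ i, R i)
    (sstar : Fin 3 → ℝ) (hsstar : ∀ m, sstar m = B₁ * R m / ∑ i, R i) :
    (∀ s : Fin 3 → ℝ, (∀ m, 0 ≤ s m) → ∑ m, s m = B₁ → s ≠ sstar →
      ∑ m, R m * (s m / (s m + s₂ m)) < ∑ m, R m * (sstar m / (sstar m + s₂ m))) ∧
    ∑ m, R m * (sstar m / (sstar m + s₂ m)) = B₁ / (B₁ + B₂) * ∑ m, R m := by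
  set S : ℝ := ∑ i, R i with hSdef
  have hS : 0 < S := Finset.sum_pos (fun i _ => hR i) ⟨0, Finset.mem_univ 0⟩
  have hs₂pos : ∀ m, 0 < s₂ m := fun m => by
    rw [hs₂]; exact div_pos (mul_pos hB₂ (hR m)) hS
  have hsstarpos : ∀ m, 0 < sstar m := fun m => by
    rw [hsstar]; exact div_pos (mul_pos hB₁ (hR m)) hS
  have hB12 : (0:ℝ) < B₁ + B₂ := by linarith
  -- value of each term at the optimum
  have hval : ∀ m, R m * (sstar m / (sstar m + s₂ m)) = B₁ / (B₁ + B₂) * R m := by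
    intro m
    rw [hsstar, hs₂]
    have hRm := (hR m).ne'
    have hS' := hS.ne'
    have hB12' := hB12.ne'
    have h : B₁ * R m / S + B₂ * R m / S = (B₁ + B₂) * R m / S := by ring
    rw [h]
    field_simp
  have hvalsum : ∑ m, R m * (sstar m / (sstar m + s₂ m)) = B₁ / (B₁ + B₂) * S := by
    rw [Finset.sum_congr rfl (fun m _ => hval m), ← Finset.mul_sum]
  -- the slope at the optimum is the same constant K for every chain
  have hK : ∀ m, R m * s₂ m / (sstar m + s₂ m) ^ 2 = B₂ * S / (B₁ + B₂) ^ 2 := by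
    intro m
    rw [hsstar, hs₂]
    have hRm := (hR m).ne'
    have hS' := hS.ne'
    have hB12' := hB12.ne'
    have h : B₁ * R m / S + B₂ * R m / S = (B₁ + B₂) * R m / S := by ring
    rw [h]
    field_simp
  set K : ℝ := B₂ * S / (B₁ + B₂) ^ 2 with hKdef
  have hsstarsum : ∑ m, sstar m = B₁ := by
    have : ∑ m, sstar m = ∑ m, B₁ * R m / S :=
      Finset.sum_congr rfl (fun m _ => hsstar m)
    rw [this, ← Finset.sum_div, ← Finset.mul_sum, ← hSdef]
    field_simp
  constructor
  · intro s hs hsum hne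
    -- error terms
    set E : Fin 3 → ℝ :=
      fun m => R m * s₂ m * (s m - sstar m) ^ 2 / ((s m + s₂ m) * (sstar m + s₂ m) ^ 2)
      with hEdef
    have hEnonneg : ∀ m, 0 ≤ E m := fun m => by
      have h1 : 0 < s m + s₂ m := by have := hs m; have := hs₂pos m; linarith
      have h2 : 0 < sstar m + s₂ m := by have := hsstarpos m; have := hs₂pos m; linarith
      have hRm := hR m
      have hsm := hs₂pos m
      rw [hEdef]; positivity
    obtain ⟨m₀, hm₀⟩ := Function.ne_iff.mp hne
    have hEpos : 0 < E m₀ := by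
      have h1 : 0 < s m₀ + s₂ m₀ := by have := hs m₀; have := hs₂pos m₀; linarith
      have h2 : 0 < sstar m₀ + s₂ m₀ := by have := hsstarpos m₀; have := hs₂pos m₀; linarith
      have hRm := hR m₀
      have hsm := hs₂pos m₀
      have hd : s m₀ - sstar m₀ ≠ 0 := sub_ne_zero.mpr hm₀
      rw [hEdef]; positivity
    have hterm : ∀ m, R m * (s m / (s m + s₂ m)) =
        R m * (sstar m / (sstar m + s₂ m)) + K * (s m - sstar m) - E m := by
      intro m
      have h1 : 0 < s m + s₂ m := by have := hs m; have := hs₂pos m; linarith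
      have h2 : 0 < sstar m + s₂ m := by have := hsstarpos m; have := hs₂pos m; linarith
      have := tangent_key (R m) (s₂ m) (s m) (sstar m) h1 h2
      rw [this, ← hK m, hEdef]
    calc ∑ m, R m * (s m / (s m + s₂ m))
        = ∑ m, (R m * (sstar m / (sstar m + s₂ m)) + K * (s m - sstar m) - E m) :=
          Finset.sum_congr rfl (fun m _ => hterm m)
      _ = (∑ m, R m * (sstar m / (sstar m + s₂ m)))
            + K * ((∑ m, s m) - ∑ m, sstar m) - ∑ m, E m := by
          rw [Finset.sum_sub_distrib, Finset.sum_add_distrib, ← Finset.mul_sum,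
            Finset.sum_sub_distrib]
      _ = (∑ m, R m * (sstar m / (sstar m + s₂ m))) - ∑ m, E m := by
          rw [hsum, hsstarsum]; ring
      _ < ∑ m, R m * (sstar m / (sstar m + s₂ m)) := by
          have hEsum : 0 < ∑ m, E m :=
            Finset.sum_pos' (fun m _ => hEnonneg m) ⟨m₀, Finset.mem_univ m₀, hEpos⟩
          linarith
  · exact hvalsum
end

section
/- Fix M ≥ 2 and N follower budgets B_n > 0. Define the symmetric operator-utility value at common reward R > 0 by V(R) = Σ_{n=1}^N (B_n/M)·ln(B_n/M) − R. Then V is strictly decreasing in R, while the stake attracted to each chain, (Σ_n B_n)/M, is independent of R; hence under symmetric play the operator's utility as computed in the paper's model is maximized exactly where the first-order condition of the asymmetric utility holds, namely at R* = ((M−1)/M²)·Σ_n B_n(1 + ln(B_n/M)). -/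
theorem symmetric_operator_utility (M N : ℕ) (hM : 2 ≤ M)
    (B : Fin N → ℝ) (hB : ∀ n, 0 < B n) :
    StrictAnti (fun R : ℝ => (∑ n, (B n / M) * Real.log (B n / M)) - R) ∧
    (∀ R R' : ℝ, (∑ n, B n) / M = (∑ n, B n) / M) ∧
    (∀ R : ℝ, 0 < R →
      ((∑ n, B n * ((M - 1) * R) * (1 + Real.log (B n * R / (R + (M - 1) * R))) / (R + (M - 1) * R) ^ 2) = 1 ↔
        R = ((M - 1) / M ^ 2) * ∑ n, B n * (1 + Real.log (B n / M)))) := by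
  have hM1 : (1:ℝ) ≤ (M:ℝ) - 1 := by
    have : (2:ℝ) ≤ (M:ℝ) := by exact_mod_cast hM
    linarith
  have hMpos : (0:ℝ) < (M:ℝ) := by linarith
  have hMne : (M:ℝ) ≠ 0 := ne_of_gt hMpos
  refine ⟨?_, fun _ _ => rfl, ?_⟩
  · intro a b hab
    simp only
    linarith
  · intro R hR
    have hRne : R ≠ 0 := ne_of_gt hR
    have hsum : R + ((M:ℝ) - 1) * R = M * R := by ring
    have hlog : ∀ n, Real.log (B n * R / (R + ((M:ℝ) - 1) * R)) = Real.log (B n / M) := by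
      intro n
      rw [hsum]
      congr 1
      field_simp
    have hterm : ∀ n, B n * (((M:ℝ) - 1) * R) * (1 + Real.log (B n * R / (R + ((M:ℝ) - 1) * R))) / (R + ((M:ℝ) - 1) * R) ^ 2
        = (((M:ℝ) - 1) / ((M:ℝ) ^ 2 * R)) * (B n * (1 + Real.log (B n / M))) := by
      intro n
      rw [hlog, hsum]
      field_simp
    rw [Finset.sum_congr rfl (fun n _ => hterm n), ← Finset.mul_sum]
    set S := ∑ n, B n * (1 + Real.log (B n / M)) with hS
    constructor
    · intro h
      have : ((M:ℝ) - 1) * S = (M:ℝ) ^ 2 * R := by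
        field_simp at h
        linarith
      field_simp
      linarith
    · intro h
      have hSne : S ≠ 0 := by
        intro h0
        rw [h0, mul_zero] at h
        exact hRne h
      have hM1ne : (M:ℝ) - 1 ≠ 0 := by linarith
      rw [h, show (M:ℝ)^2 * (((M:ℝ) - 1) / (M:ℝ) ^ 2 * S) = ((M:ℝ)-1)*S from by
        field_simp, div_mul_eq_mul_div, div_self (mul_ne_zero hM1ne hSne)]
end
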